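/- The properified unravelled canonical model of SC has no empty world: in the unravelling U(Mc) of the canonical pseudo-model of SC (and hence in its quotient by the equivalence ≡), every history h has at least one alive agent, i.e., there exists a ∈ A with h ∼^U_a h. -/

import Mathlib

attribute [local instance] Classical.propDecidable

noncomputable section

/-- Formulas of the epistemic language `L_D` with distributed knowledge `D_B`
for nonempty groups `B` of agents. -/
inductive Form (A AP : Type) : Type
  | atom : AP → Form A AP
  | neg  : Form A AP → Form A AP
  | and  : Form A AP → Form A AP → Form A AP
  | dk   : (B : Finset A) → B.Nonempty → Form A AP → Form A AP

namespace Form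

variable {A AP : Type}

/-- Disjunction, `φ ∨ ψ := ¬(¬φ ∧ ¬ψ)`. -/
def or (φ ψ : Form A AP) : Form A AP := neg ((neg φ).and (neg ψ))

/-- Implication, `φ ⇒ ψ := ¬φ ∨ ψ`. -/
def imp (φ ψ : Form A AP) : Form A AP := (neg φ).or ψ

/-- `⊤ := p ∨ ¬p`. -/
def verum [Nonempty AP] : Form A AP :=
  (atom (Classical.arbitrary AP)).or (neg (atom (Classical.arbitrary AP)))

/-- `⊥ := ¬⊤`. -/
def falsum [Nonempty AP] : Form A AP := neg verum

/-- Individual knowledge `K_a φ := D_{{a}} φ`. -/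
def K (a : A) (φ : Form A AP) : Form A AP := dk {a} (Finset.singleton_nonempty a) φ

/-- `dead_a := K_a ⊥`. -/
def deadAgent [Nonempty AP] (a : A) : Form A AP := K a falsum

/-- `alive_a := ¬dead_a`. -/
def aliveAgent [Nonempty AP] (a : A) : Form A AP := (deadAgent a).neg

/-- `alive_B := ¬ D_B ⊥`. -/
def aliveGrp [Nonempty AP] (B : Finset A) (hB : B.Nonempty) : Form A AP := (dk B hB falsum).neg

/-- Finite conjunction. -/
def bigAnd [Nonempty AP] : List (Form A AP) → Form A AP
  | [] => verum
  | φ :: t => φ.and (bigAnd t)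

/-- Finite disjunction. -/
def bigOr [Nonempty AP] : List (Form A AP) → Form A AP
  | [] => falsum
  | φ :: t => φ.or (bigOr t)

/-- `dead_C := ⋀_{a ∈ C} dead_a`. -/
def deadGrp [Nonempty AP] (C : Finset A) : Form A AP := bigAnd (C.toList.map deadAgent)

end Form

/-- A propositional tautology: true under every assignment that interprets `¬` and `∧`
classically (atoms and `D_B`-formulas are treated as opaque). -/
def IsTaut {A AP : Type} (φ : Form A AP) : Prop :=
  ∀ v : Form A AP → Prop,
    (∀ ψ : Form A AP, v ψ.neg ↔ ¬ v ψ) →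
    (∀ ψ χ : Form A AP, v (ψ.and χ) ↔ (v ψ ∧ v χ)) →
    v φ

theorem unionNE {α : Type} [DecidableEq α] {s t : Finset α} (h : s.Nonempty) :
    (s ∪ t).Nonempty :=
  ⟨h.choose, Finset.mem_union_left _ h.choose_spec⟩

section ProofSystem

variable {A AP : Type} [Fintype A] [Nonempty AP]

/-- The proof system `SC` (axioms `K`, `B`, `4`, `Mono`, `Union`, `NE`, `P`, all
propositional tautologies, modus ponens and necessitation), extended by an arbitrary
additional set `Ax` of axioms. -/
inductive Prf (Ax : Form A AP → Prop) : Form A AP → Prop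
  | taut {φ : Form A AP} : IsTaut φ → Prf Ax φ
  | mp {φ ψ : Form A AP} : Prf Ax (φ.imp ψ) → Prf Ax φ → Prf Ax ψ
  | nec {φ : Form A AP} (B : Finset A) (hB : B.Nonempty) :
      Prf Ax φ → Prf Ax (Form.dk B hB φ)
  | axK {φ ψ : Form A AP} (B : Finset A) (hB : B.Nonempty) :
      Prf Ax ((Form.dk B hB (φ.imp ψ)).imp ((Form.dk B hB φ).imp (Form.dk B hB ψ)))
  | axB {φ : Form A AP} (B : Finset A) (hB : B.Nonempty) :
      Prf Ax (φ.imp (Form.dk B hB (Form.neg (Form.dk B hB φ.neg))))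
  | ax4 {φ : Form A AP} (B : Finset A) (hB : B.Nonempty) :
      Prf Ax ((Form.dk B hB φ).imp (Form.dk B hB (Form.dk B hB φ)))
  | axMono {φ : Form A AP} (B B' : Finset A) (hB : B.Nonempty) (hB' : B'.Nonempty)
      (hsub : B ⊆ B') : Prf Ax ((Form.dk B hB φ).imp (Form.dk B' hB' φ))
  | axUnion (B B' : Finset A) (hB : B.Nonempty) (hB' : B'.Nonempty) :
      Prf Ax (((Form.aliveGrp B hB).and (Form.aliveGrp B' hB')).imp
        (Form.aliveGrp (B ∪ B') (unionNE hB)))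
  | axNE : Prf Ax (Form.bigOr ((Finset.univ : Finset A).toList.map Form.aliveAgent))
  | axP {φ : Form A AP} (B : Finset A) (hB : B.Nonempty) :
      Prf Ax ((((Form.aliveGrp B hB).and (Form.deadGrp Bᶜ)).and φ).imp
        (Form.dk B hB ((Form.deadGrp Bᶜ).imp φ)))
  | extra {φ : Form A AP} : Ax φ → Prf Ax φ

/-- Provability in `SC` itself (no extra axioms). -/
def SC : Form A AP → Prop := Prf (fun _ => False)

/-- Instances of Axiom `Min : alive_B ∧ dead_{A∖B} ⇒ D_B dead_{A∖B}` for `B ⊊ A`. -/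
def MinAx : Form A AP → Prop := fun φ =>
  ∃ (B : Finset A) (hB : B.Nonempty), B ≠ Finset.univ ∧
    φ = ((Form.aliveGrp B hB).and (Form.deadGrp Bᶜ)).imp (Form.dk B hB (Form.deadGrp Bᶜ))

/-- Instances of Axiom `Max : alive_B ⇒ ¬ D_B ¬ dead_{A∖B}` for `B ⊊ A`. -/
def MaxAx : Form A AP → Prop := fun φ =>
  ∃ (B : Finset A) (hB : B.Nonempty), B ≠ Finset.univ ∧
    φ = (Form.aliveGrp B hB).imp (Form.neg (Form.dk B hB (Form.neg (Form.deadGrp Bᶜ))))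

/-- Provability in `SCmin = SC + Min`. -/
def SCmin : Form A AP → Prop := Prf MinAx

/-- Provability in `SCmax = SC + Max`. -/
def SCmax : Form A AP → Prop := Prf MaxAx

/-- `Γ ⊢_P φ` : some finite conjunction of members of `Γ` provably implies `φ`. -/
def ProvesFrom (P : Form A AP → Prop) (Γ : Set (Form A AP)) (φ : Form A AP) : Prop :=
  ∃ L : List (Form A AP), (∀ γ ∈ L, γ ∈ Γ) ∧ P ((Form.bigAnd L).imp φ)

/-- Consistency of a set of formulas with respect to a provability predicate `P`. -/
def ConsistentSet (P : Form A AP → Prop) (Γ : Set (Form A AP)) : Prop :=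
  ¬ ProvesFrom P Γ Form.falsum

/-- Maximal consistent sets of formulas. -/
def MaxConsistent (P : Form A AP → Prop) (Γ : Set (Form A AP)) : Prop :=
  ConsistentSet P Γ ∧ ∀ φ ∉ Γ, ¬ ConsistentSet P (insert φ Γ)

end ProofSystem

/-! ### Simplicial models -/

/-- The data of a (generalized) simplicial model: a set `S` of simplexes over the vertex
type `V`, a colouring `chi`, a set of worlds `Wld` and a labelling of worlds. -/
structure SimpData (A AP V : Type) where
  S : Set (Finset V)
  chi : V → A
  Wld : Set (Finset V)
  label : Finset V → Set AP

namespace SimpData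

variable {A AP V : Type}

/-- A facet: a simplex maximal under inclusion. -/
def IsFacet (C : SimpData A AP V) (X : Finset V) : Prop :=
  X ∈ C.S ∧ ∀ Y ∈ C.S, X ⊆ Y → X = Y

/-- `⟨V,S,chi⟩` is a chromatic simplicial complex: simplexes are nonempty, every
singleton is a simplex, `S` is downward closed, and every simplex has pairwise
distinct colours. -/
def IsComplex (C : SimpData A AP V) : Prop :=
  (∀ X ∈ C.S, X.Nonempty) ∧
  (∀ v : V, ({v} : Finset V) ∈ C.S) ∧
  (∀ X ∈ C.S, ∀ Y : Finset V, Y ⊆ X → Y.Nonempty → Y ∈ C.S) ∧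
  (∀ X ∈ C.S, ∀ v ∈ X, ∀ w ∈ X, C.chi v = C.chi w → v = w)

/-- `C` is a generalized simplicial model: a chromatic simplicial complex together
with a set of worlds `Wld` with `Facets(C) ⊆ Wld ⊆ S`. -/
def IsModel (C : SimpData A AP V) : Prop :=
  C.IsComplex ∧ (∀ X, C.IsFacet X → X ∈ C.Wld) ∧ C.Wld ⊆ C.S

/-- The model is minimal: the worlds are exactly the facets. -/
def Minimal (C : SimpData A AP V) : Prop := ∀ X, X ∈ C.Wld ↔ C.IsFacet X

/-- The model is maximal: every simplex is a world. -/
def Maximal (C : SimpData A AP V) : Prop := C.Wld = C.S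

end SimpData

/-- Satisfaction on simplicial models: `C,w ⊨ D_B φ` iff `φ` holds at every world `w'`
with `B ⊆ chi(w ∩ w')`. -/
def SimpData.sat {A AP V : Type} (C : SimpData A AP V) : Finset V → Form A AP → Prop
  | w, .atom p => p ∈ C.label w
  | w, .neg φ => ¬ C.sat w φ
  | w, .and φ ψ => C.sat w φ ∧ C.sat w ψ
  | w, .dk B _ φ => ∀ w' ∈ C.Wld, (↑B : Set A) ⊆ C.chi '' ((↑w : Set V) ∩ ↑w') → C.sat w' φ

/-! ### Partial epistemic models -/

/-- The data of a partial epistemic model: an accessibility relation for each agent and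
a labelling of worlds. -/
structure PEData (A AP W : Type) where
  rel : A → W → W → Prop
  label : W → Set AP

namespace PEData

variable {A AP W : Type}

/-- Each relation is a partial equivalence relation (symmetric and transitive). -/
def IsPE (M : PEData A AP W) : Prop := ∀ a : A, Symmetric (M.rel a) ∧ Transitive (M.rel a)

/-- The set of agents alive in a world. -/
def live (M : PEData A AP W) (w : W) : Set A := {a | M.rel a w w}

/-- Every world has at least one alive agent. -/
def NoEmptyWorld (M : PEData A AP W) : Prop := ∀ w : W, (M.live w).Nonempty

/-- Distinct worlds with the same alive agents are distinguished by some alive agent. -/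
def Proper (M : PEData A AP W) : Prop :=
  ∀ w w' : W, w ≠ w' → M.live w = M.live w' → ∃ a ∈ M.live w, ¬ M.rel a w w'

/-- The model has no sub-world. -/
def Minimal (M : PEData A AP W) : Prop :=
  ∀ w w' : W, M.live w ⊂ M.live w' → ∃ a ∈ M.live w, ¬ M.rel a w w'

/-- The model has all sub-worlds. -/
def Maximal (M : PEData A AP W) : Prop :=
  ∀ w' : W, ∀ B : Set A, B.Nonempty → B ⊂ M.live w' →
    ∃ w : W, M.live w = B ∧ ∀ a ∈ B, M.rel a w w'

end PEData

/-- Satisfaction on partial epistemic models: `M,w ⊨ D_B φ` iff `φ` holds at every `w'`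
with `w ∼_a w'` for all `a ∈ B`. -/
def PEData.sat {A AP W : Type} (M : PEData A AP W) : W → Form A AP → Prop
  | w, .atom p => p ∈ M.label w
  | w, .neg φ => ¬ M.sat w φ
  | w, .and φ ψ => M.sat w φ ∧ M.sat w ψ
  | w, .dk B _ φ => ∀ w' : W, (∀ a ∈ B, M.rel a w w') → M.sat w' φ

/-- The partial epistemic model `κ(C)` associated with a simplicial model `C`:
same worlds, `w ∼_a w'` iff `a ∈ chi(w ∩ w')`, same labelling. -/
def kappa {A AP V : Type} (C : SimpData A AP V) : PEData A AP {w : Finset V // w ∈ C.Wld} where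
  rel := fun a w w' => a ∈ C.chi '' ((↑w.1 : Set V) ∩ ↑w'.1)
  label := fun w => C.label w.1

/-- Vertices of `σ(M)`: pairs `v^w_a = (a, [w]_a)` with `a` alive in `w`. -/
def sigmaVert {A AP W : Type} (M : PEData A AP W) : Type :=
  {v : A × Set W // ∃ w : W, M.rel v.1 w w ∧ v.2 = {w' | M.rel v.1 w w'}}

/-- The world `X_w = { v^w_a | a ∈ live(w) }` of `σ(M)`. -/
def sigmaWorld {A AP W : Type} [Fintype A] (M : PEData A AP W) (w : W) :
    Finset (sigmaVert M) :=
  ((Finset.univ : Finset A).filter (fun a => M.rel a w w)).attach.image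
    (fun a => ⟨(a.1, {w' | M.rel a.1 w w'}),
      ⟨w, by exact (Finset.mem_filter.mp a.2).2, rfl⟩⟩)

/-- The simplicial model `σ(M)` associated with a partial epistemic model `M`:
simplexes are the nonempty subsets of the sets `X_w`, worlds are the `X_w`,
colouring is the first projection, and `ℓ(X_w) = L(w)`. -/
def sigmaModel {A AP W : Type} [Fintype A] (M : PEData A AP W) :
    SimpData A AP (sigmaVert M) where
  S := {X | X.Nonempty ∧ ∃ w : W, X ⊆ sigmaWorld M w}
  chi := fun v => v.1.1
  Wld := {X | ∃ w : W, X = sigmaWorld M w}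
  label := fun X => {p | ∃ w : W, X = sigmaWorld M w ∧ p ∈ M.label w}

/-! ### Pseudo-models, the canonical model and unravelling -/

/-- The data of a pseudo-model: a relation `∼_B` for every group `B ⊆ A`. -/
structure PseudoData (A AP W : Type) where
  rel : Finset A → W → W → Prop
  label : W → Set AP

/-- `M` is a pseudo-model: each `∼_B` is symmetric and transitive, the relations are
antitone (`∼_{B'} ⊆ ∼_B` for `B ⊆ B'`), and `w ∼_B w` together with `w ∼_{B'} w`
implies `w ∼_{B ∪ B'} w`. -/
def PseudoData.IsPseudo {A AP W : Type} [DecidableEq A] (M : PseudoData A AP W) : Prop :=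
  (∀ B : Finset A, Symmetric (M.rel B)) ∧
  (∀ B : Finset A, Transitive (M.rel B)) ∧
  (∀ B B' : Finset A, B ⊆ B' → ∀ w w' : W, M.rel B' w w' → M.rel B w w') ∧
  (∀ (w : W) (B B' : Finset A), M.rel B w w → M.rel B' w w → M.rel (B ∪ B') w w)

/-- Satisfaction on pseudo-models: `D_B φ` quantifies over `∼_B`-successors. -/
def PseudoData.sat {A AP W : Type} (M : PseudoData A AP W) : W → Form A AP → Prop
  | w, .atom p => p ∈ M.label w
  | w, .neg φ => ¬ M.sat w φ
  | w, .and φ ψ => M.sat w φ ∧ M.sat w ψ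
  | w, .dk B _ φ => ∀ w' : W, M.rel B w w' → M.sat w' φ

/-- The canonical pseudo-model of a proof system `P`: worlds are the maximal
`P`-consistent sets, `Γ ∼_B Δ` iff every `φ` with `D_B φ ∈ Γ` satisfies `φ ∈ Δ`,
and `L(Γ) = Γ ∩ AP`. -/
def canonicalPsm (A AP : Type) [Fintype A] [Nonempty AP] (P : Form A AP → Prop) :
    PseudoData A AP {Γ : Set (Form A AP) // MaxConsistent P Γ} where
  rel := fun B Γ Δ => ∀ (hB : B.Nonempty) (φ : Form A AP), Form.dk B hB φ ∈ Γ.1 → φ ∈ Δ.1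
  label := fun Γ => {p | Form.atom p ∈ Γ.1}

/-- `IsHist M w l` : the sequence starting at `w` with steps `l` is a history of `M`. -/
def IsHist {A AP W : Type} (M : PseudoData A AP W) : W → List (Finset A × W) → Prop
  | _, [] => True
  | w, (B, w') :: t => M.rel B w w' ∧ IsHist M w' t

/-- A history `(w₀, B₁, w₁, …, B_k, w_k)` of a pseudo-model `M`. -/
structure Hist {A AP W : Type} (M : PseudoData A AP W) where
  first : W
  steps : List (Finset A × W)
  valid : IsHist M first steps

/-- The last world of a history. -/
def Hist.last {A AP W : Type} {M : PseudoData A AP W} (h : Hist M) : W :=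
  (h.steps.map Prod.snd).getLastD h.first

/-- `h →_a h'` : `h'` extends `h` by one step `(B, w)` with `a ∈ B`. -/
def histStep {A AP W : Type} (M : PseudoData A AP W) (a : A) (h h' : Hist M) : Prop :=
  ∃ (B : Finset A) (w : W), a ∈ B ∧ h'.first = h.first ∧ h'.steps = h.steps ++ [(B, w)]

/-- `∼^U_a` : the symmetric-transitive closure of `→_a`. -/
def histRel {A AP W : Type} (M : PseudoData A AP W) (a : A) : Hist M → Hist M → Prop :=
  Relation.TransGen (fun h h' => histStep M a h h' ∨ histStep M a h' h)

/-- The unravelling `U(M)` of a pseudo-model `M`: worlds are histories, relations are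
the `∼^U_a`, and `L^U(h) = L(last h)`. -/
def unravel {A AP W : Type} (M : PseudoData A AP W) : PEData A AP (Hist M) where
  rel := histRel M
  label := fun h => M.label h.last

/-- World-equivalence `w ≡ w'` : same alive agents and related by every alive agent. -/
def pequiv {A AP W : Type} (M : PEData A AP W) (w w' : W) : Prop :=
  M.live w = M.live w' ∧ ∀ a ∈ M.live w, M.rel a w w'

/-- The quotient of a partial epistemic model by world-equivalence. -/
def properify {A AP W : Type} (M : PEData A AP W) : PEData A AP (Quot (pequiv M)) where
  rel := fun a x y => ∃ w w' : W, x = Quot.mk _ w ∧ y = Quot.mk _ w' ∧ M.rel a w w'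
  label := fun x => {p | ∃ w : W, x = Quot.mk _ w ∧ p ∈ M.label w}

/-! ### Local simplicial models, morphisms and the guarded positive fragment -/

/-- The data of a local simplicial model: atomic propositions label the vertices. -/
structure LocalSimpData (A AP V : Type) where
  S : Set (Finset V)
  chi : V → A
  Wld : Set (Finset V)
  vlabel : V → Set AP

namespace LocalSimpData

variable {A AP V : Type}

/-- A facet: a simplex maximal under inclusion. -/
def IsFacet (C : LocalSimpData A AP V) (X : Finset V) : Prop :=
  X ∈ C.S ∧ ∀ Y ∈ C.S, X ⊆ Y → X = Y

/-- `C` is a local simplicial model with respect to the ownership map `owner : AP → A`: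
a chromatic simplicial complex with `Facets ⊆ Wld ⊆ S`, where each vertex is labelled
with atomic propositions belonging to its colour. -/
def IsModel (C : LocalSimpData A AP V) (owner : AP → A) : Prop :=
  (∀ X ∈ C.S, X.Nonempty) ∧
  (∀ v : V, ({v} : Finset V) ∈ C.S) ∧
  (∀ X ∈ C.S, ∀ Y : Finset V, Y ⊆ X → Y.Nonempty → Y ∈ C.S) ∧
  (∀ X ∈ C.S, ∀ v ∈ X, ∀ w ∈ X, C.chi v = C.chi w → v = w) ∧
  (∀ X, C.IsFacet X → X ∈ C.Wld) ∧ C.Wld ⊆ C.S ∧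
  (∀ v : V, ∀ p ∈ C.vlabel v, owner p = C.chi v)

/-- The labelling of a world: the union of the labellings of its vertices. -/
def wlabel (C : LocalSimpData A AP V) (X : Finset V) : Set AP :=
  ⋃ v ∈ X, C.vlabel v

end LocalSimpData

/-- Purely propositional formulas. -/
inductive PForm (AP : Type) : Type
  | atom : AP → PForm AP
  | neg : PForm AP → PForm AP
  | and : PForm AP → PForm AP → PForm AP

/-- The atomic propositions occurring in a propositional formula. -/
def PForm.atoms {AP : Type} : PForm AP → Set AP
  | .atom p => {p}
  | .neg ψ => ψ.atoms
  | .and ψ χ => ψ.atoms ∪ χ.atoms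

/-- Satisfaction of propositional formulas at a world of a local simplicial model. -/
def PForm.psat {A AP V : Type} (C : LocalSimpData A AP V) (w : Finset V) : PForm AP → Prop
  | .atom p => p ∈ C.wlabel w
  | .neg ψ => ¬ PForm.psat C w ψ
  | .and ψ χ => PForm.psat C w ψ ∧ PForm.psat C w χ

/-- The guarded positive epistemic fragment:
`φ ::= (alive_B ⇒ ψ_B) | φ∧φ | φ∨φ | D_U φ | C_U φ`. -/
inductive GForm (A AP : Type) : Type
  | guard : Finset A → PForm AP → GForm A AP
  | and : GForm A AP → GForm A AP → GForm A AP
  | or : GForm A AP → GForm A AP → GForm A AP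
  | dk : Finset A → GForm A AP → GForm A AP
  | ck : Finset A → GForm A AP → GForm A AP

/-- Well-formedness of guarded formulas: in a guard `alive_B ⇒ ψ_B`, all atomic
propositions of `ψ_B` belong to agents of `B`. -/
def GForm.WF {A AP : Type} (owner : AP → A) : GForm A AP → Prop
  | .guard B ψ => ∀ p ∈ ψ.atoms, owner p ∈ B
  | .and φ₁ φ₂ => φ₁.WF owner ∧ φ₂.WF owner
  | .or φ₁ φ₂ => φ₁.WF owner ∧ φ₂.WF owner
  | .dk _ φ => φ.WF owner
  | .ck _ φ => φ.WF owner

/-- Reachability through a sequence of worlds, consecutive ones sharing a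
`U`-coloured simplex. -/
def creach {A AP V : Type} (C : LocalSimpData A AP V) (U : Finset A) :
    Finset V → Finset V → Prop :=
  Relation.ReflTransGen
    (fun X Y => Y ∈ C.Wld ∧ (↑U : Set A) ⊆ C.chi '' ((↑X : Set V) ∩ ↑Y))

/-- Satisfaction of guarded positive formulas on local simplicial models. -/
def GForm.gsat {A AP V : Type} (C : LocalSimpData A AP V) :
    Finset V → GForm A AP → Prop
  | w, .guard B ψ => ((↑B : Set A) ⊆ C.chi '' (↑w : Set V)) → ψ.psat C w
  | w, .and φ₁ φ₂ => φ₁.gsat C w ∧ φ₂.gsat C w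
  | w, .or φ₁ φ₂ => φ₁.gsat C w ∨ φ₂.gsat C w
  | w, .dk U φ => ∀ w' ∈ C.Wld, (↑U : Set A) ⊆ C.chi '' ((↑w : Set V) ∩ ↑w') → φ.gsat C w'
  | w, .ck U φ => ∀ w' ∈ C.Wld, creach C U w w' → φ.gsat C w'

/-- Image of a simplex under a vertex map. -/
def fimage {V V' : Type} (f : V → V') (X : Finset V) : Finset V' :=
  X.image f

/-- Morphisms of local simplicial models: map simplexes to simplexes and worlds to
worlds, preserving colours and vertex labellings. -/
def IsMorphism {A AP V V' : Type} (C : LocalSimpData A AP V) (D : LocalSimpData A AP V')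
    (f : V → V') : Prop :=
  (∀ X ∈ C.S, fimage f X ∈ D.S) ∧
  (∀ X ∈ C.Wld, fimage f X ∈ D.Wld) ∧
  (∀ v : V, D.chi (f v) = C.chi v) ∧
  (∀ v : V, D.vlabel (f v) = C.vlabel v)

end

/-! Axiom `NE` puts some `alive_a` into every maximal consistent set `Γ`, and axioms `K`,
`B` and `4` give `alive_a ∧ K_a φ ⊢ φ`, so `Γ ∼_{a} Γ` in the canonical pseudo-model. Any
history `h` therefore extends by the step `({a}, last h)` to some `h'` with `h →_a h'`, and
going there and back gives `h ∼^U_a h`. Quotienting by `≡` keeps every alive agent alive. -/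

open Form

section Valuation

variable {A AP : Type}

structure IsValuation (v : Form A AP → Prop) : Prop where
  neg_iff : ∀ ψ : Form A AP, v ψ.neg ↔ ¬ v ψ
  and_iff : ∀ ψ χ : Form A AP, v (ψ.and χ) ↔ (v ψ ∧ v χ)

theorem isTaut_of {φ : Form A AP} (h : ∀ v, IsValuation v → v φ) : IsTaut φ :=
  fun v hn ha => h v ⟨hn, ha⟩

namespace IsValuation

variable {v : Form A AP → Prop}

theorem imp_iff (hv : IsValuation v) (φ ψ : Form A AP) : v (φ.imp ψ) ↔ (v φ → v ψ) := by
  simp only [Form.imp, Form.or, hv.neg_iff, hv.and_iff]; tauto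

theorem or_iff (hv : IsValuation v) (φ ψ : Form A AP) : v (φ.or ψ) ↔ (v φ ∨ v ψ) := by
  simp only [Form.or, hv.neg_iff, hv.and_iff]; tauto

theorem verum [Nonempty AP] (hv : IsValuation v) : v (verum : Form A AP) := by
  simp only [Form.verum, hv.or_iff, hv.neg_iff]; tauto

theorem not_falsum [Nonempty AP] (hv : IsValuation v) : ¬ v (falsum : Form A AP) := by
  simpa only [Form.falsum, hv.neg_iff, not_not] using hv.verum

theorem bigAnd_iff [Nonempty AP] (hv : IsValuation v) (L : List (Form A AP)) :
    v (bigAnd L) ↔ ∀ γ ∈ L, v γ := by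
  induction L with
  | nil => simpa [Form.bigAnd] using hv.verum
  | cons φ t ih => simp only [Form.bigAnd, hv.and_iff, ih, List.forall_mem_cons]

end IsValuation

end Valuation

section Derivability

variable {A AP : Type} [Fintype A] [Nonempty AP] {Ax : Form A AP → Prop}

theorem Prf.dk_imp {φ ψ : Form A AP} (B : Finset A) (hB : B.Nonempty) (h : Prf Ax (φ.imp ψ)) :
    Prf Ax ((dk B hB φ).imp (dk B hB ψ)) :=
  Prf.mp (Prf.axK B hB) (Prf.nec B hB h)

namespace ProvesFrom

variable {Γ : Set (Form A AP)} {φ ψ χ : Form A AP}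

theorem of_prf (h : Prf Ax φ) : ProvesFrom (Prf Ax) Γ φ :=
  ⟨[], by simp, Prf.mp (Prf.taut (isTaut_of fun v hv => by
    simp only [hv.imp_iff]; exact fun h _ => h)) h⟩

theorem of_mem (h : φ ∈ Γ) : ProvesFrom (Prf Ax) Γ φ :=
  ⟨[φ], by simpa using h, Prf.taut (isTaut_of fun v hv => by
    simp [hv.imp_iff, hv.bigAnd_iff])⟩

theorem of_imp₂ (h₁ : ProvesFrom (Prf Ax) Γ φ) (h₂ : ProvesFrom (Prf Ax) Γ ψ)
    (h : Prf Ax (φ.imp (ψ.imp χ))) : ProvesFrom (Prf Ax) Γ χ := by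
  obtain ⟨L₁, hL₁, p₁⟩ := h₁
  obtain ⟨L₂, hL₂, p₂⟩ := h₂
  refine ⟨L₁ ++ L₂, by simpa [or_imp, forall_and] using And.intro hL₁ hL₂, ?_⟩
  have hcut : IsTaut (((bigAnd L₁).imp φ).imp (((bigAnd L₂).imp ψ).imp
      ((φ.imp (ψ.imp χ)).imp ((bigAnd (L₁ ++ L₂)).imp χ)))) :=
    isTaut_of fun v hv => by
      simp only [hv.imp_iff, hv.bigAnd_iff, List.mem_append, or_imp, forall_and]
      tauto
  exact Prf.mp (Prf.mp (Prf.mp (Prf.taut hcut) p₁) p₂) h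

theorem neg_of_insert (h : ProvesFrom (Prf Ax) (insert φ Γ) falsum) :
    ProvesFrom (Prf Ax) Γ φ.neg := by
  obtain ⟨L, hL, p⟩ := h
  refine ⟨L.filter (· ∈ Γ), fun γ hγ => by simpa using (List.mem_filter.mp hγ).2, ?_⟩
  have hded : IsTaut (((bigAnd L).imp falsum).imp ((bigAnd (L.filter (· ∈ Γ))).imp φ.neg)) :=
    isTaut_of fun v hv => by
      simp only [hv.imp_iff, hv.bigAnd_iff, hv.neg_iff, List.mem_filter, decide_eq_true_eq]
      intro hL' hΓ hφ
      exact hv.not_falsum <| hL' fun γ hγ => (hL γ hγ).elim (· ▸ hφ) (hΓ γ ⟨hγ, ·⟩)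
  exact Prf.mp (Prf.taut hded) p

end ProvesFrom

namespace MaxConsistent

variable {Γ : Set (Form A AP)} {φ ψ χ : Form A AP}

theorem mem_of_provesFrom (hΓ : MaxConsistent (Prf Ax) Γ) (h : ProvesFrom (Prf Ax) Γ φ) :
    φ ∈ Γ := by
  by_contra hφ
  have hneg : ProvesFrom (Prf Ax) Γ φ.neg := ProvesFrom.neg_of_insert (not_not.mp (hΓ.2 φ hφ))
  exact hΓ.1 <| h.of_imp₂ hneg <| Prf.taut <| isTaut_of fun v hv => by
    simp only [hv.imp_iff, hv.neg_iff]; tauto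

theorem neg_mem_iff (hΓ : MaxConsistent (Prf Ax) Γ) : φ.neg ∈ Γ ↔ φ ∉ Γ := by
  refine ⟨fun hneg hφ => hΓ.1 ?_, fun hφ => ?_⟩
  · refine (ProvesFrom.of_mem hφ).of_imp₂ (ProvesFrom.of_mem hneg) (Prf.taut ?_)
    exact isTaut_of fun v hv => by simp only [hv.imp_iff, hv.neg_iff]; tauto
  · exact hΓ.mem_of_provesFrom (ProvesFrom.neg_of_insert (not_not.mp (hΓ.2 φ hφ)))

theorem mem_of_imp₂ (hΓ : MaxConsistent (Prf Ax) Γ) (h : Prf Ax (φ.imp (ψ.imp χ)))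
    (hφ : φ ∈ Γ) (hψ : ψ ∈ Γ) : χ ∈ Γ :=
  hΓ.mem_of_provesFrom ((ProvesFrom.of_mem hφ).of_imp₂ (ProvesFrom.of_mem hψ) h)

theorem mem_of_imp (hΓ : MaxConsistent (Prf Ax) Γ) (h : Prf Ax (φ.imp ψ)) (hφ : φ ∈ Γ) :
    ψ ∈ Γ :=
  hΓ.mem_of_provesFrom ((ProvesFrom.of_mem hφ).of_imp₂ (ProvesFrom.of_prf h) <|
    Prf.taut <| isTaut_of fun v hv => by simp only [hv.imp_iff]; tauto)

theorem dk_mem_of_imp₂ (hΓ : MaxConsistent (Prf Ax) Γ) {B : Finset A} {hB : B.Nonempty}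
    (h : Prf Ax (φ.imp (ψ.imp χ))) (hφ : dk B hB φ ∈ Γ) (hψ : dk B hB ψ ∈ Γ) :
    dk B hB χ ∈ Γ :=
  hΓ.mem_of_imp₂ (Prf.axK B hB) (hΓ.mem_of_imp (Prf.dk_imp B hB h) hφ) hψ

theorem exists_mem_of_bigOr_mem (hΓ : MaxConsistent (Prf Ax) Γ) {L : List (Form A AP)}
    (h : bigOr L ∈ Γ) : ∃ φ ∈ L, φ ∈ Γ := by
  induction L with
  | nil =>
    refine absurd h (hΓ.neg_mem_iff.mp (hΓ.mem_of_provesFrom (ProvesFrom.of_prf ?_)))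
    exact Prf.taut <| isTaut_of fun v hv => by
      simpa [Form.bigOr, hv.neg_iff] using hv.not_falsum
  | cons φ t ih =>
    by_cases hφ : φ ∈ Γ
    · exact ⟨φ, List.mem_cons_self, hφ⟩
    · have hor : Prf Ax ((φ.or (bigOr t)).imp (φ.neg.imp (bigOr t))) :=
        Prf.taut <| isTaut_of fun v hv => by
          simp only [hv.imp_iff, hv.or_iff, hv.neg_iff]; tauto
      obtain ⟨ψ, hψt, hψΓ⟩ := ih (hΓ.mem_of_imp₂ hor h (hΓ.neg_mem_iff.mpr hφ))
      exact ⟨ψ, List.mem_cons_of_mem φ hψt, hψΓ⟩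

theorem exists_aliveAgent_mem (hΓ : MaxConsistent (Prf Ax) Γ) :
    ∃ a : A, aliveAgent a ∈ Γ := by
  have hNE := hΓ.mem_of_provesFrom (ProvesFrom.of_prf (Prf.axNE (Ax := Ax)))
  obtain ⟨φ, hφL, hφΓ⟩ := hΓ.exists_mem_of_bigOr_mem hNE
  obtain ⟨a, -, rfl⟩ := List.mem_map.mp hφL
  exact ⟨a, hφΓ⟩

/-- If `φ ∉ Γ`, axiom `B` puts `D_B ¬D_B ¬¬φ` into `Γ` while `4` turns `D_B φ` into
`D_B D_B ¬¬φ`; together they give `D_B ⊥`, contradicting `alive_B`. -/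
theorem mem_of_dk_mem (hΓ : MaxConsistent (Prf Ax) Γ) {B : Finset A} {hB : B.Nonempty}
    (halive : aliveGrp B hB ∈ Γ) (h : dk B hB φ ∈ Γ) : φ ∈ Γ := by
  by_contra hφ
  have hdne : Prf Ax ((dk B hB φ).imp (dk B hB φ.neg.neg)) :=
    Prf.dk_imp B hB <| Prf.taut <| isTaut_of fun v hv => by
      simp only [hv.imp_iff, hv.neg_iff]; tauto
  have hdual : dk B hB (dk B hB φ.neg.neg).neg ∈ Γ :=
    hΓ.mem_of_imp (Prf.axB B hB) (hΓ.neg_mem_iff.mpr hφ)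
  have h4 : dk B hB (dk B hB φ.neg.neg) ∈ Γ :=
    hΓ.mem_of_imp (Prf.dk_imp B hB hdne) (hΓ.mem_of_imp (Prf.ax4 B hB) h)
  have hdead : dk B hB falsum ∈ Γ := by
    refine hΓ.dk_mem_of_imp₂ (Prf.taut <| isTaut_of fun v hv => ?_) hdual h4
    simp only [hv.imp_iff, hv.neg_iff]; tauto
  exact hΓ.neg_mem_iff.mp halive hdead

end MaxConsistent

theorem canonicalPsm_rel_self (Γ : {Γ : Set (Form A AP) // MaxConsistent (Prf Ax) Γ})
    {B : Finset A} {hB : B.Nonempty} (halive : aliveGrp B hB ∈ Γ.1) :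
    (canonicalPsm A AP (Prf Ax)).rel B Γ Γ :=
  fun _ _ h => Γ.2.mem_of_dk_mem halive h

end Derivability

section Unravelling

variable {A AP W : Type} {M : PseudoData A AP W}

theorem IsHist.append {w : W} {steps : List (Finset A × W)} (h : IsHist M w steps)
    {B : Finset A} {w' : W} (hr : M.rel B ((steps.map Prod.snd).getLastD w) w') :
    IsHist M w (steps ++ [(B, w')]) := by
  induction steps generalizing w with
  | nil => exact ⟨hr, trivial⟩
  | cons s t ih =>
    rw [List.map_cons, List.getLastD_cons] at hr
    exact ⟨h.1, ih h.2 hr⟩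

def Hist.snoc (h : Hist M) (B : Finset A) (w : W) (hr : M.rel B h.last w) : Hist M :=
  ⟨h.first, h.steps ++ [(B, w)], h.valid.append hr⟩

theorem histRel_self {h : Hist M} {B : Finset A} {w : W} (hr : M.rel B h.last w) {a : A}
    (ha : a ∈ B) : histRel M a h h :=
  have hstep : histStep M a h (h.snoc B w hr) := ⟨B, w, ha, rfl, rfl⟩
  .tail (.single (.inl hstep)) (.inr hstep)

theorem unravel_noEmptyWorld
    (hM : ∀ w : W, ∃ (B : Finset A) (w' : W), B.Nonempty ∧ M.rel B w w') :
    (unravel M).NoEmptyWorld := fun h => by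
  obtain ⟨B, w', ⟨a, ha⟩, hr⟩ := hM h.last
  exact ⟨a, histRel_self hr ha⟩

end Unravelling

theorem properify_noEmptyWorld {A AP W : Type} {M : PEData A AP W} (hM : M.NoEmptyWorld) :
    (properify M).NoEmptyWorld := by
  rintro ⟨w⟩
  obtain ⟨a, ha⟩ := hM w
  exact ⟨a, w, w, rfl, rfl, ha⟩

/-- The (properified) unravelled canonical model of `SC` has no empty
world: every history `h` of `Mc` has at least one alive agent, and the same holds in
the quotient by `≡`. -/
theorem unravel_canonical_no_empty (A AP : Type) [Fintype A] [Nonempty AP] :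
    (unravel (canonicalPsm A AP SC)).NoEmptyWorld ∧
    (properify (unravel (canonicalPsm A AP SC))).NoEmptyWorld := by
  have hU : (unravel (canonicalPsm A AP SC)).NoEmptyWorld := by
    refine unravel_noEmptyWorld fun Γ => ?_
    obtain ⟨a, ha⟩ := Γ.2.exists_aliveAgent_mem
    exact ⟨{a}, Γ, Finset.singleton_nonempty a, canonicalPsm_rel_self Γ ha⟩
  exact ⟨hU, properify_noEmptyWorld hU⟩
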